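/- With E_{δ,z} as above (built from vectors satisfying Σ_m |v_m⟩⟨v_m| = (D/d)·1), for every z ∈ {0,1}^D we have λ_max(E_{δ,z}) ≤ e^δ λ_min(E_{δ,z}); consequently the measurement (√E_{δ,z})_z is δ-quantum-differentially-private. -/

import Mathlib

/-! Each factor `e^{-(δ/2)‖z - e_m‖₁}` of `E_{δ,z}` lies in `[w, e^δ w]` for
`w = e^{-(δ/2)(‖z‖₁ + 1)}`, because `‖z - e_m‖₁ = ‖z‖₁ ± 1`. The frame identity
`Σ_m |v_m⟩⟨v_m| = (D/d) 1` turns this into the Loewner sandwich `B • 1 ≤ E_{δ,z} ≤ e^δ B • 1`, so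
both the eigenvalues of `E_{δ,z}` and the numbers `Re tr(ρ E_{δ,z})` for density matrices `ρ` lie
in `[B, e^δ B]`. -/

open Matrix BigOperators ComplexOrder

/-- Hamming distance between z ∈ {0,1}^D and the m-th standard basis vector e_m. -/
def hammingToBasis {D : ℕ} (z : Fin D → Bool) (m : Fin D) : ℕ :=
  (Finset.univ.filter (fun i => z i ≠ decide (i = m))).card

/-- The noisy 2-design POVM element E_{δ,z}. -/
noncomputable def noisyPOVMElement {d D : ℕ} (v : Fin D → (Fin d → ℂ)) (δ : ℝ)
    (z : Fin D → Bool) : Matrix (Fin d) (Fin d) ℂ :=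
  (((Real.exp (δ / 2) / (Real.exp (δ / 2) + 1)) ^ D * (d / D) : ℝ) : ℂ) •
    ∑ m, ((Real.exp (-(δ / 2) * (hammingToBasis z m)) : ℝ) : ℂ) •
      Matrix.vecMulVec (v m) (star (v m))

open scoped MatrixOrder
open Finset Real

namespace Matrix

variable {𝕜 n : Type*} [RCLike 𝕜] [Fintype n]

theorem PosSemidef.trace_mul_nonneg {ρ X : Matrix n n 𝕜} (hρ : ρ.PosSemidef)
    (hX : X.PosSemidef) : 0 ≤ (ρ * X).trace := by
  classical
  obtain ⟨B, rfl⟩ := CStarAlgebra.nonneg_iff_eq_star_mul_self.mp hρ.nonneg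
  rw [star_eq_conjTranspose, Matrix.mul_assoc, trace_mul_comm]
  exact (hX.mul_mul_conjTranspose_same B).trace_nonneg

variable [DecidableEq n] {ρ A : Matrix n n 𝕜} {r : ℝ}

theorem PosSemidef.le_re_trace_mul_of_smul_one_le (hρ : ρ.PosSemidef) (htr : ρ.trace = 1)
    (h : (r : 𝕜) • (1 : Matrix n n 𝕜) ≤ A) : r ≤ RCLike.re (ρ * A).trace := by
  have := (RCLike.nonneg_iff.mp (hρ.trace_mul_nonneg (le_iff.mp h))).1
  simpa [Matrix.mul_sub, htr, RCLike.smul_re] using this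

theorem PosSemidef.re_trace_mul_le_of_le_smul_one (hρ : ρ.PosSemidef) (htr : ρ.trace = 1)
    (h : A ≤ (r : 𝕜) • (1 : Matrix n n 𝕜)) : RCLike.re (ρ * A).trace ≤ r := by
  have := (RCLike.nonneg_iff.mp (hρ.trace_mul_nonneg (le_iff.mp h))).1
  simpa [Matrix.mul_sub, htr, RCLike.smul_re] using this

theorem IsHermitian.star_eigenvectorBasis_dotProduct_self (hA : A.IsHermitian) (i : n) :
    star (hA.eigenvectorBasis i).ofLp ⬝ᵥ (hA.eigenvectorBasis i).ofLp = 1 := by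
  rw [dotProduct_comm, ← EuclideanSpace.inner_eq_star_dotProduct, hA.eigenvectorBasis.inner_eq_one]

theorem IsHermitian.le_eigenvalues_of_smul_one_le (hA : A.IsHermitian)
    (h : (r : 𝕜) • (1 : Matrix n n 𝕜) ≤ A) (i : n) : r ≤ hA.eigenvalues i := by
  rw [hA.eigenvalues_eq]
  simpa only [algebraMap_smul, sub_mulVec, smul_mulVec, one_mulVec, dotProduct_sub, dotProduct_smul,
    hA.star_eigenvectorBasis_dotProduct_self, map_sub, RCLike.smul_re, RCLike.one_re, mul_one,
    sub_nonneg] using (le_iff.mp h).re_dotProduct_nonneg (hA.eigenvectorBasis i).ofLp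

theorem IsHermitian.eigenvalues_le_of_le_smul_one (hA : A.IsHermitian)
    (h : A ≤ (r : 𝕜) • (1 : Matrix n n 𝕜)) (i : n) : hA.eigenvalues i ≤ r := by
  rw [hA.eigenvalues_eq]
  simpa only [algebraMap_smul, sub_mulVec, smul_mulVec, one_mulVec, dotProduct_sub, dotProduct_smul,
    hA.star_eigenvectorBasis_dotProduct_self, map_sub, RCLike.smul_re, RCLike.one_re, mul_one,
    sub_nonneg] using (le_iff.mp h).re_dotProduct_nonneg (hA.eigenvectorBasis i).ofLp

variable {ι : Type*} [Fintype ι] {v : ι → n → 𝕜} {s : ℝ} {w : ι → ℝ}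

theorem smul_one_le_sum_smul_vecMulVec
    (hframe : ∑ m, vecMulVec (v m) (star (v m)) = (s : 𝕜) • (1 : Matrix n n 𝕜))
    (hw : ∀ m, r ≤ w m) :
    ((r * s : ℝ) : 𝕜) • (1 : Matrix n n 𝕜) ≤ ∑ m, (w m : 𝕜) • vecMulVec (v m) (star (v m)) := by
  rw [RCLike.ofReal_mul, ← smul_smul, ← hframe, Finset.smul_sum]
  refine Finset.sum_le_sum fun m _ => le_iff.mpr ?_
  rw [← sub_smul, ← RCLike.ofReal_sub]
  exact (posSemidef_vecMulVec_self_star _).smul (RCLike.ofReal_nonneg.mpr (sub_nonneg.mpr (hw m)))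

theorem sum_smul_vecMulVec_le_smul_one
    (hframe : ∑ m, vecMulVec (v m) (star (v m)) = (s : 𝕜) • (1 : Matrix n n 𝕜))
    (hw : ∀ m, w m ≤ r) :
    ∑ m, (w m : 𝕜) • vecMulVec (v m) (star (v m)) ≤ ((r * s : ℝ) : 𝕜) • (1 : Matrix n n 𝕜) := by
  rw [RCLike.ofReal_mul, ← smul_smul, ← hframe, Finset.smul_sum]
  refine Finset.sum_le_sum fun m _ => le_iff.mpr ?_
  rw [← sub_smul, ← RCLike.ofReal_sub]
  exact (posSemidef_vecMulVec_self_star _).smul (RCLike.ofReal_nonneg.mpr (sub_nonneg.mpr (hw m)))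

end Matrix

theorem hammingToBasis_le_card_add_one {D : ℕ} (z : Fin D → Bool) (m : Fin D) :
    hammingToBasis z m ≤ #{i | z i = true} + 1 :=
  calc hammingToBasis z m ≤ #(insert m ({i | z i = true} : Finset (Fin D))) := by
        refine card_le_card fun i hi => ?_
        by_cases h : i = m <;> simp_all
    _ ≤ _ := card_insert_le _ _

theorem card_le_hammingToBasis_add_one {D : ℕ} (z : Fin D → Bool) (m : Fin D) :
    #{i | z i = true} ≤ hammingToBasis z m + 1 :=
  calc #{i | z i = true} ≤ #(insert m ({i | z i ≠ decide (i = m)} : Finset (Fin D))) := by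
        refine card_le_card fun i hi => ?_
        by_cases h : i = m <;> simp_all
    _ ≤ _ := card_insert_le _ _

section NoisyPOVM

variable {δ : ℝ}

theorem exp_neg_card_le_exp_neg_hammingToBasis {D : ℕ} (hδ : 0 ≤ δ) (z : Fin D → Bool)
    (m : Fin D) :
    exp (-(δ / 2) * (#{i | z i = true} + 1)) ≤ exp (-(δ / 2) * hammingToBasis z m) := by
  have : (hammingToBasis z m : ℝ) ≤ #{i | z i = true} + 1 := by
    exact_mod_cast hammingToBasis_le_card_add_one z m
  exact exp_le_exp.2 (by nlinarith)

theorem exp_neg_hammingToBasis_le {D : ℕ} (hδ : 0 ≤ δ) (z : Fin D → Bool) (m : Fin D) :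
    exp (-(δ / 2) * hammingToBasis z m) ≤ exp δ * exp (-(δ / 2) * (#{i | z i = true} + 1)) := by
  have : (#{i | z i = true} : ℝ) ≤ hammingToBasis z m + 1 := by
    exact_mod_cast card_le_hammingToBasis_add_one z m
  rw [← exp_add]
  exact exp_le_exp.2 (by nlinarith)

theorem exists_smul_one_le_noisyPOVMElement_le {d D : ℕ} {v : Fin D → Fin d → ℂ}
    (hframe : ∑ m, vecMulVec (v m) (star (v m)) = (((D : ℝ) / d : ℝ) : ℂ) • (1 : Matrix _ _ ℂ))
    (hδ : 0 ≤ δ) (z : Fin D → Bool) :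
    ∃ B : ℝ, (B : ℂ) • 1 ≤ noisyPOVMElement v δ z ∧
      noisyPOVMElement v δ z ≤ ((exp δ * B : ℝ) : ℂ) • 1 := by
  set c := (exp (δ / 2) / (exp (δ / 2) + 1)) ^ D * (d / D)
  set w := exp (-(δ / 2) * (#{i | z i = true} + 1))
  have hc : 0 ≤ c := by positivity
  have hE : noisyPOVMElement v δ z =
      ∑ m, ((c * exp (-(δ / 2) * hammingToBasis z m) : ℝ) : ℂ) • vecMulVec (v m) (star (v m)) := by
    simp only [noisyPOVMElement, Finset.smul_sum, smul_smul, ← Complex.ofReal_mul]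
    rfl
  refine ⟨c * w * (D / d), ?_, ?_⟩ <;> rw [hE]
  · exact smul_one_le_sum_smul_vecMulVec hframe fun m =>
      mul_le_mul_of_nonneg_left (exp_neg_card_le_exp_neg_hammingToBasis hδ z m) hc
  · rw [show exp δ * (c * w * (D / d)) = c * (exp δ * w) * (D / d) by ring]
    exact sum_smul_vecMulVec_le_smul_one hframe fun m =>
      mul_le_mul_of_nonneg_left (exp_neg_hammingToBasis_le hδ z m) hc

end NoisyPOVM

theorem noisy_two_design_is_qdp_general
    {d D : ℕ} (hd : 0 < d)
    (v : Fin D → (Fin d → ℂ))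
    (hres : ∑ m,Matrix.vecMulVec (v m) (star (v m))
      = (((D : ℝ) / d : ℝ) : ℂ) • (1 : Matrix (Fin d) (Fin d) ℂ))
    (δ : ℝ) (hδ : 0 < δ) :
    ∀ z : Fin D → Bool,
      (∃ hz : (noisyPOVMElement v δ z).IsHermitian,
        (⨆ i, hz.eigenvalues i) ≤ Real.exp δ * ⨅ i, hz.eigenvalues i) ∧
      (∀ ρ σ : Matrix (Fin d) (Fin d) ℂ,
        ρ.PosSemidef → ρ.trace = 1 → σ.PosSemidef → σ.trace = 1 →
        (ρ * noisyPOVMElement v δ z).trace.re ≤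
          Real.exp δ * (σ * noisyPOVMElement v δ z).trace.re) := by
  intro z
  obtain ⟨B, hlo, hhi⟩ := exists_smul_one_le_noisyPOVMElement_le hres hδ.le z
  have hE : (noisyPOVMElement v δ z).IsHermitian := by
    simpa using (le_iff.mp hlo).isHermitian.add (isHermitian_one.smul (Complex.conj_ofReal B))
  have : Nonempty (Fin d) := ⟨⟨0, hd⟩⟩
  refine ⟨⟨hE, ?_⟩, fun ρ σ hρ hρtr hσ hσtr => ?_⟩
  · calc ⨆ i, hE.eigenvalues i ≤ exp δ * B := ciSup_le (hE.eigenvalues_le_of_le_smul_one hhi)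
      _ ≤ exp δ * ⨅ i, hE.eigenvalues i :=
        mul_le_mul_of_nonneg_left (le_ciInf (hE.le_eigenvalues_of_smul_one_le hlo)) (exp_pos δ).le
  · calc (ρ * noisyPOVMElement v δ z).trace.re ≤ exp δ * B :=
          hρ.re_trace_mul_le_of_le_smul_one hρtr hhi
      _ ≤ exp δ * (σ * noisyPOVMElement v δ z).trace.re :=
        mul_le_mul_of_nonneg_left (hσ.le_re_trace_mul_of_smul_one_le hσtr hlo) (exp_pos δ).le

/-- Each E_{δ,z} satisfies λ_max(E_{δ,z}) ≤ e^δ λ_min(E_{δ,z});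
consequently the measurement (√E_{δ,z})_z is δ-quantum-differentially-private. -/
theorem noisy_two_design_is_qdp
    {d D : ℕ} (hd : 0 < d) (hD : 0 < D)
    (v : Fin D → (Fin d → ℂ)) (hv : ∀ m, star (v m) ⬝ᵥ v m = 1)
    (hres : ∑ m,Matrix.vecMulVec (v m) (star (v m))
      = (((D : ℝ) / d : ℝ) : ℂ) • (1 : Matrix (Fin d) (Fin d) ℂ))
    (δ : ℝ) (hδ : 0 < δ) :
    ∀ z : Fin D → Bool,
      (∃ hz : (noisyPOVMElement v δ z).IsHermitian,
        (⨆ i, hz.eigenvalues i) ≤ Real.exp δ * ⨅ i, hz.eigenvalues i) ∧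
      (∀ ρ σ : Matrix (Fin d) (Fin d) ℂ,
        ρ.PosSemidef → ρ.trace = 1 → σ.PosSemidef → σ.trace = 1 →
        (ρ * noisyPOVMElement v δ z).trace.re ≤
          Real.exp δ * (σ * noisyPOVMElement v δ z).trace.re) :=
  noisy_two_design_is_qdp_general hd v hres δ hδ
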